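/- arXiv:2503.07284 — 2 statements merged into one kernel-verified Lean document; each statement's English description precedes it below -/
import Mathlib

section
/- In one space dimension, the numerical flux G*(ρ_K, u_K; ρ_L, u_L) = (⟨ρ⟩_γ ū, p̄/ε² + ⟨ρ⟩_γ ū²), where ū = (u_K + u_L)/2, p̄ = (κρ_K^γ + κρ_L^γ)/2, and ⟨ρ⟩_γ = ((γ−1)/γ)(ρ_L^γ − ρ_K^γ)/(ρ_L^{γ−1} − ρ_K^{γ−1}), satisfies the Tadmor entropy conservation condition: ⟦V·G⟧ − ⟦V⟧·G* = ⟦ω⟧, where ⟦a⟧ = a_L − a_K denotes the jump, V = (−u²/2 + (κγ/(ε²(γ−1)))ρ^{γ−1}, u) is the entropy variable, G(ρ,u) = (ρu, κρ^γ/ε² + ρu²) is the exact flux, and ω(ρ,u) = u(ρu²/2 + κρ^γ/(ε²(γ−1)) + κρ^γ/ε²) is the entropy flux. -/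
open Real

/-!
Write `ψ = V·G − ω` for the entropy flux potential; for the barotropic Euler system it is
`ψ = p u / ε²` with pressure `p = κ ρ^γ`. Tadmor's condition therefore reads
`⟦V⟧·G* = ⟦ψ⟧`. In `⟦V⟧·G*` the kinetic parts cancel because `⟦u²/2⟧ = ⟦u⟧ ū`, and the mean
`⟨ρ⟩_γ` is chosen precisely so that `⟦ρ^(γ-1)⟧ ⟨ρ⟩_γ = ((γ-1)/γ) ⟦ρ^γ⟧`. What is left is
`(κ/ε²) (⟦ρ^γ⟧ ū + p̄ ⟦u⟧) = ⟦ψ⟧`, the product rule for jumps.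
-/

theorem entropy_flux_potential_eq {κ γ ε ρ : ℝ} (hγ : γ ≠ 1) (hρ : ρ ≠ 0) (u : ℝ) :
    (-u ^ 2 / 2 + (κ * γ / (ε ^ 2 * (γ - 1))) * ρ ^ (γ - 1)) * (ρ * u)
        + u * (κ * ρ ^ γ / ε ^ 2 + ρ * u ^ 2)
        - u * (ρ * u ^ 2 / 2 + κ * ρ ^ γ / (ε ^ 2 * (γ - 1)) + κ * ρ ^ γ / ε ^ 2)
      = κ * ρ ^ γ / ε ^ 2 * u := by
  have hγ1 : γ - 1 ≠ 0 := sub_ne_zero.mpr hγ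
  rw [rpow_sub_one hρ]
  field_simp
  ring

theorem rpow_sub_one_sub_mul_gammaMean {γ ρK ρL : ℝ} (hγ : γ ≠ 1) (hK : 0 ≤ ρK) (hL : 0 ≤ ρL)
    (hne : ρK ≠ ρL) :
    (ρL ^ (γ - 1) - ρK ^ (γ - 1))
        * (((γ - 1) / γ) * (ρL ^ γ - ρK ^ γ) / (ρL ^ (γ - 1) - ρK ^ (γ - 1)))
      = ((γ - 1) / γ) * (ρL ^ γ - ρK ^ γ) := by
  have hjump : ρL ^ (γ - 1) - ρK ^ (γ - 1) ≠ 0 := fun h ↦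
    hne (rpow_left_injOn (sub_ne_zero.mpr hγ) hK hL (sub_eq_zero.mp h).symm)
  exact mul_div_cancel₀ _ hjump

theorem tadmor_entropy_conservation_general (κ γ ε : ℝ) (hγ : 1 < γ)
    (ρK ρL uK uL : ℝ) (hK : 0 < ρK) (hL : 0 < ρL) (hne : ρK ≠ ρL)
    (V1 V2 G1 G2 W : ℝ → ℝ → ℝ)
    (hV1 : ∀ ρ u, V1 ρ u = -u ^ 2 / 2 + (κ * γ / (ε ^ 2 * (γ - 1))) * ρ ^ (γ - 1))
    (hV2 : ∀ ρ u, V2 ρ u = u)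
    (hG1 : ∀ ρ u, G1 ρ u = ρ * u)
    (hG2 : ∀ ρ u, G2 ρ u = κ * ρ ^ γ / ε ^ 2 + ρ * u ^ 2)
    (hW : ∀ ρ u, W ρ u = u * (ρ * u ^ 2 / 2 + κ * ρ ^ γ / (ε ^ 2 * (γ - 1)) + κ * ρ ^ γ / ε ^ 2)) :
    (V1 ρL uL * G1 ρL uL + V2 ρL uL * G2 ρL uL)
      - (V1 ρK uK * G1 ρK uK + V2 ρK uK * G2 ρK uK)
      - ((V1 ρL uL - V1 ρK uK) *
          (((γ - 1) / γ) * (ρL ^ γ - ρK ^ γ) / (ρL ^ (γ - 1) - ρK ^ (γ - 1)) * ((uK + uL) / 2))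
        + (V2 ρL uL - V2 ρK uK) *
          (((κ * ρK ^ γ + κ * ρL ^ γ) / 2) / ε ^ 2
            + ((γ - 1) / γ) * (ρL ^ γ - ρK ^ γ) / (ρL ^ (γ - 1) - ρK ^ (γ - 1))
              * ((uK + uL) / 2) ^ 2))
      = W ρL uL - W ρK uK := by
  have hγ1 : γ ≠ 1 := hγ.ne'
  have hψL := entropy_flux_potential_eq (κ := κ) (ε := ε) hγ1 hL.ne' uL
  have hψK := entropy_flux_potential_eq (κ := κ) (ε := ε) hγ1 hK.ne' uK
  have hmean := rpow_sub_one_sub_mul_gammaMean hγ1 hK.le hL.le hne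
  have hcoef : κ * γ / (ε ^ 2 * (γ - 1)) * ((γ - 1) / γ) = κ / ε ^ 2 := by
    have : γ - 1 ≠ 0 := sub_ne_zero.mpr hγ1
    have : γ ≠ 0 := by positivity
    field_simp
  simp only [hV1, hV2, hG1, hG2, hW]
  generalize ((γ - 1) / γ) * (ρL ^ γ - ρK ^ γ) / (ρL ^ (γ - 1) - ρK ^ (γ - 1)) = m at hmean ⊢
  linear_combination hψL - hψK - (κ * γ / (ε ^ 2 * (γ - 1)) * ((uK + uL) / 2)) * hmean
    - ((ρL ^ γ - ρK ^ γ) * ((uK + uL) / 2)) * hcoef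

theorem tadmor_entropy_conservation (κ γ ε : ℝ) (hκ : 0 < κ) (hγ : 1 < γ) (hε : ε ≠ 0)
    (ρK ρL uK uL : ℝ) (hK : 0 < ρK) (hL : 0 < ρL) (hne : ρK ≠ ρL)
    (V1 V2 G1 G2 W : ℝ → ℝ → ℝ)
    (hV1 : ∀ ρ u, V1 ρ u = -u ^ 2 / 2 + (κ * γ / (ε ^ 2 * (γ - 1))) * ρ ^ (γ - 1))
    (hV2 : ∀ ρ u, V2 ρ u = u)
    (hG1 : ∀ ρ u, G1 ρ u = ρ * u)
    (hG2 : ∀ ρ u, G2 ρ u = κ * ρ ^ γ / ε ^ 2 + ρ * u ^ 2)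
    (hW : ∀ ρ u, W ρ u = u * (ρ * u ^ 2 / 2 + κ * ρ ^ γ / (ε ^ 2 * (γ - 1)) + κ * ρ ^ γ / ε ^ 2)) :
    (V1 ρL uL * G1 ρL uL + V2 ρL uL * G2 ρL uL)
      - (V1 ρK uK * G1 ρK uK + V2 ρK uK * G2 ρK uK)
      - ((V1 ρL uL - V1 ρK uK) *
          (((γ - 1) / γ) * (ρL ^ γ - ρK ^ γ) / (ρL ^ (γ - 1) - ρK ^ (γ - 1)) * ((uK + uL) / 2))
        + (V2 ρL uL - V2 ρK uK) *
          (((κ * ρK ^ γ + κ * ρL ^ γ) / 2) / ε ^ 2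
            + ((γ - 1) / γ) * (ρL ^ γ - ρK ^ γ) / (ρL ^ (γ - 1) - ρK ^ (γ - 1))
              * ((uK + uL) / 2) ^ 2))
      = W ρL uL - W ρK uK :=
  tadmor_entropy_conservation_general κ γ ε hγ ρK ρL uK uL hK hL hne V1 V2 G1 G2 W hV1 hV2 hG1 hG2
    hW
end

section
/- Suppose the stage identities u^i = u^n − Δt Σ_{j<i} ã_{ij} F_j − (Δt/ρ₀) Σ_{j≤i} a_{ij} ∇p_j hold for smooth vector fields, and the mass-stage identities Σ_{j<i} a_{ij} div u^j + a_{ii} div u^n − Δt a_{ii} Σ_{j<i} ã_{ij} div F_j − (Δt/ρ₀) a_{ii} Σ_{j≤i} a_{ij} Δp_j = 0 hold for every i ∈ {1,…,s}, where F_j = ∇·(u^j ⊗ u^j), a_{ii} ≠ 0, and div u^n = 0. Then div u^i = 0 for every stage i ∈ {1,…,s}. -/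
noncomputable def pd {d : ℕ} (i : Fin d) (f : (Fin d → ℝ) → ℝ) (x : Fin d → ℝ) : ℝ :=
  fderiv ℝ f x (Pi.single i 1)

lemma pd_contDiff {d : ℕ} (k : Fin d) {f : (Fin d → ℝ) → ℝ} (hf : ContDiff ℝ (⊤ : ℕ∞) f) :
    ContDiff ℝ (⊤ : ℕ∞) (pd k f) := by
  have h := (hf.fderiv_right (m := (⊤ : ℕ∞)) le_rfl).clm_apply
    (contDiff_const (c := (Pi.single k 1 : Fin d → ℝ)))
  exact h

lemma pd_sub {d : ℕ} (k : Fin d) {f g : (Fin d → ℝ) → ℝ} (x : Fin d → ℝ)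
    (hf : DifferentiableAt ℝ f x) (hg : DifferentiableAt ℝ g x) :
    pd k (fun y => f y - g y) x = pd k f x - pd k g x := by
  simp [pd, fderiv_fun_sub hf hg]

lemma pd_const_mul {d : ℕ} (k : Fin d) (c : ℝ) {f : (Fin d → ℝ) → ℝ} (x : Fin d → ℝ)
    (hf : DifferentiableAt ℝ f x) :
    pd k (fun y => c * f y) x = c * pd k f x := by
  simp [pd, fderiv_const_mul hf c]

lemma pd_sum {d : ℕ} (k : Fin d) {ι : Type*} (t : Finset ι)
    (f : ι → (Fin d → ℝ) → ℝ) (x : Fin d → ℝ)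
    (hf : ∀ j ∈ t, DifferentiableAt ℝ (f j) x) :
    pd k (fun y => ∑ j ∈ t, f j y) x = ∑ j ∈ t, pd k (f j) x := by
  simp [pd, fderiv_fun_sum hf]

theorem divergence_free_stages (d s : ℕ) (Δt ρ₀ : ℝ) (hρ₀ : ρ₀ ≠ 0)
    (A At : Matrix (Fin s) (Fin s) ℝ) (hdiag : ∀ i, A i i ≠ 0)
    (u F : Fin s → (Fin d → ℝ) → Fin d → ℝ)
    (un : (Fin d → ℝ) → Fin d → ℝ)
    (p : Fin s → (Fin d → ℝ) → ℝ)
    (hu : ∀ i k, ContDiff ℝ (⊤ : ℕ∞) (fun x => u i x k))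
    (hun : ∀ k, ContDiff ℝ (⊤ : ℕ∞) (fun x => un x k))
    (hF : ∀ i k, ContDiff ℝ (⊤ : ℕ∞) (fun x => F i x k))
    (hp : ∀ i, ContDiff ℝ (⊤ : ℕ∞) (p i))
    (hstage : ∀ i x k, u i x k = un x k
      - Δt * ∑ j ∈ Finset.univ.filter (fun j => j < i), At i j * F j x k
      - (Δt / ρ₀) * ∑ j ∈ Finset.univ.filter (fun j => j ≤ i), A i j * pd k (p j) x)
    (hmassstage : ∀ (i : Fin s) (x : Fin d → ℝ),
      (∑ j ∈ Finset.univ.filter (fun j => j < i),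
          A i j * ∑ k, pd k (fun y => u j y k) x)
        + A i i * ∑ k, pd k (fun y => un y k) x
        - Δt * A i i * ∑ j ∈ Finset.univ.filter (fun j => j < i),
            At i j * ∑ k, pd k (fun y => F j y k) x
        - (Δt / ρ₀) * A i i * ∑ j ∈ Finset.univ.filter (fun j => j ≤ i),
            A i j * ∑ k, pd k (fun y => pd k (p j) y) x = 0)
    (hdivn : ∀ x, ∑ k, pd k (fun y => un y k) x = 0) :
    ∀ i x, ∑ k, pd k (fun y => u i y k) x = 0 := by
  -- divergence expansion of stage identity
  have hdiv : ∀ i x, ∑ k, pd k (fun y => u i y k) x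
      = (∑ k, pd k (fun y => un y k) x)
        - Δt * ∑ j ∈ Finset.univ.filter (fun j => j < i),
            At i j * ∑ k, pd k (fun y => F j y k) x
        - (Δt / ρ₀) * ∑ j ∈ Finset.univ.filter (fun j => j ≤ i),
            A i j * ∑ k, pd k (fun y => pd k (p j) y) x := by
    intro i x
    have hk : ∀ k : Fin d, pd k (fun y => u i y k) x
        = pd k (fun y => un y k) x
          - Δt * ∑ j ∈ Finset.univ.filter (fun j => j < i),
              At i j * pd k (fun y => F j y k) x
          - (Δt / ρ₀) * ∑ j ∈ Finset.univ.filter (fun j => j ≤ i),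
              A i j * pd k (fun y => pd k (p j) y) x := by
      intro k
      have heq : (fun y => u i y k) = fun y => (un y k
          - Δt * ∑ j ∈ Finset.univ.filter (fun j => j < i), At i j * F j y k)
          - (Δt / ρ₀) * ∑ j ∈ Finset.univ.filter (fun j => j ≤ i), A i j * pd k (p j) y := by
        funext y
        rw [hstage i y k]
      have d1 : DifferentiableAt ℝ (fun y => un y k) x :=
        ((hun k).differentiable (by simp)) x
      have dF : ∀ j ∈ Finset.univ.filter (fun j => j < i),
          DifferentiableAt ℝ (fun y => At i j * F j y k) x := fun j _ =>
        (((hF j k).differentiable (by simp)) x).const_mul _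
      have dP : ∀ j ∈ Finset.univ.filter (fun j => j ≤ i),
          DifferentiableAt ℝ (fun y => A i j * pd k (p j) y) x := fun j _ =>
        (((pd_contDiff k (hp j)).differentiable (by simp)) x).const_mul _
      have d2 : DifferentiableAt ℝ
          (fun y => ∑ j ∈ Finset.univ.filter (fun j => j < i), At i j * F j y k) x :=
        DifferentiableAt.fun_sum dF
      have d3 : DifferentiableAt ℝ
          (fun y => ∑ j ∈ Finset.univ.filter (fun j => j ≤ i), A i j * pd k (p j) y) x :=
        DifferentiableAt.fun_sum dP
      rw [heq, pd_sub k x ((d1.fun_sub (d2.const_mul Δt))) (d3.const_mul _),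
        pd_sub k x d1 (d2.const_mul Δt), pd_const_mul k Δt x d2,
        pd_const_mul k (Δt / ρ₀) x d3, pd_sum k _ _ x dF, pd_sum k _ _ x dP]
      have e1 : ∑ j ∈ Finset.univ.filter (fun j => j < i),
          pd k (fun y => At i j * F j y k) x
          = ∑ j ∈ Finset.univ.filter (fun j => j < i), At i j * pd k (fun y => F j y k) x :=
        Finset.sum_congr rfl fun j _ =>
          pd_const_mul k _ x (((hF j k).differentiable (by simp)) x)
      have e2 : ∑ j ∈ Finset.univ.filter (fun j => j ≤ i),
          pd k (fun y => A i j * pd k (p j) y) x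
          = ∑ j ∈ Finset.univ.filter (fun j => j ≤ i),
              A i j * pd k (fun y => pd k (p j) y) x :=
        Finset.sum_congr rfl fun j _ =>
          pd_const_mul k _ x (((pd_contDiff k (hp j)).differentiable (by simp)) x)
      rw [e1, e2]
    calc ∑ k, pd k (fun y => u i y k) x
        = ∑ k : Fin d, (pd k (fun y => un y k) x
          - Δt * ∑ j ∈ Finset.univ.filter (fun j => j < i),
              At i j * pd k (fun y => F j y k) x
          - (Δt / ρ₀) * ∑ j ∈ Finset.univ.filter (fun j => j ≤ i),
              A i j * pd k (fun y => pd k (p j) y) x) := Finset.sum_congr rfl fun k _ => hk k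
      _ = _ := by
          rw [Finset.sum_sub_distrib, Finset.sum_sub_distrib]
          congr 1
          · congr 1
            rw [← Finset.mul_sum, Finset.sum_comm]
            congr 1
            exact Finset.sum_congr rfl fun j _ => (Finset.mul_sum _ _ _).symm
          · rw [← Finset.mul_sum, Finset.sum_comm]
            congr 1
            exact Finset.sum_congr rfl fun j _ => (Finset.mul_sum _ _ _).symm
  intro i
  induction i using WellFoundedLT.induction with
  | ind i IH =>
    intro x
    have hm := hmassstage i x
    have hz : ∑ j ∈ Finset.univ.filter (fun j => j < i),
        A i j * ∑ k, pd k (fun y => u j y k) x = 0 := by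
      apply Finset.sum_eq_zero
      intro j hj
      rw [Finset.mem_filter] at hj
      rw [IH j hj.2 x, mul_zero]
    rw [hz, hdivn x, zero_add, mul_zero, zero_sub] at hm
    have hfac : A i i * ((∑ k, pd k (fun y => un y k) x)
        - Δt * ∑ j ∈ Finset.univ.filter (fun j => j < i),
            At i j * ∑ k, pd k (fun y => F j y k) x
        - (Δt / ρ₀) * ∑ j ∈ Finset.univ.filter (fun j => j ≤ i),
            A i j * ∑ k, pd k (fun y => pd k (p j) y) x) = 0 := by
      rw [hdivn x]
      ring_nf
      ring_nf at hm
      linarith [hm]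
    rw [hdiv i x]
    exact (mul_eq_zero.mp hfac).resolve_left (hdiag i)
end
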